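/- Let N ≥ 1 and define f_N(x) := ∫_0^∞ ∫_0^∞ exp(−r−s) · (4x² + 4x(r+s) + (r−s)²)^N dr ds for real x > 0. Then f_N is differentiable on (0, ∞) and satisfies the inhomogeneous first-order differential equation f_N′(x) = (1 + N/x + 1/(2x)) · f_N(x) − (1/(2x)) · e^{2x} · Γ(2N+2, 2x), where Γ(a, t) := ∫_t^∞ u^{a−1} e^{−u} du is the upper incomplete Gamma function. -/

import Mathlib

/-!
Write `q = 4x² + 4x(r+s) + (r-s)²` and `A(r,s) = (x - (r-s)/2) q^N`. Pointwise
`2x ∂ₓ(q^N) = (2N+1) q^N + ∂ᵣA(r,s) + ∂ᵣA(s,r)`, while `A(r,s) + A(s,r) = 2x q^N` because `q`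
is symmetric in `r, s`. Integrating against `e^{-r-s}` over the quadrant, using the swap
symmetry and one integration by parts in `r` (boundary term `A(0,s) = (2x+s)^{2N+1}/2`), gives
`2x f' = (2N+1) f + 2x f - ∫₀^∞ e^{-s} (2x+s)^{2N+1} ds`, and the last integral is
`e^{2x} Γ(2N+2, 2x)`.
-/

open MeasureTheory Finset

/-- The two-dimensional Laplace-type integral `f_N(x)` arising from the pair of
conjugate characteristic polynomials of the class AII† ensemble. -/
noncomputable def fAII (N : ℕ) (x : ℝ) : ℝ :=
  ∫ r in Set.Ioi (0 : ℝ), ∫ s in Set.Ioi (0 : ℝ),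
    Real.exp (-r - s) * (4 * x ^ 2 + 4 * x * (r + s) + (r - s) ^ 2) ^ N

/-- The upper incomplete Gamma function `Γ(a,t) = ∫_t^∞ u^{a−1} e^{−u} du`. -/
noncomputable def upperGamma (a t : ℝ) : ℝ :=
  ∫ u in Set.Ioi t, u ^ (a - 1) * Real.exp (-u)

open Real Set Filter Topology

@[fun_prop]
def HasPolyGrowthOnQuadrant (g : ℝ × ℝ → ℝ) : Prop :=
  ∃ C : ℝ, ∃ m : ℕ, 0 ≤ C ∧
    ∀ p : ℝ × ℝ, 0 ≤ p.1 → 0 ≤ p.2 → |g p| ≤ C * ((1 + p.1) * (1 + p.2)) ^ m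

namespace HasPolyGrowthOnQuadrant

variable {f g : ℝ × ℝ → ℝ}

@[fun_prop]
lemma const (c : ℝ) : HasPolyGrowthOnQuadrant fun _ => c :=
  ⟨|c|, 0, abs_nonneg c, fun _ _ _ => by simp⟩

@[fun_prop]
lemma fst : HasPolyGrowthOnQuadrant fun p => p.1 :=
  ⟨1, 1, zero_le_one, fun p h₁ h₂ => by rw [abs_of_nonneg h₁]; nlinarith⟩

@[fun_prop]
lemma snd : HasPolyGrowthOnQuadrant fun p => p.2 :=
  ⟨1, 1, zero_le_one, fun p h₁ h₂ => by rw [abs_of_nonneg h₂]; nlinarith⟩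

@[fun_prop]
lemma add (hf : HasPolyGrowthOnQuadrant f) (hg : HasPolyGrowthOnQuadrant g) :
    HasPolyGrowthOnQuadrant fun p => f p + g p := by
  obtain ⟨C₁, m₁, hC₁, hf⟩ := hf
  obtain ⟨C₂, m₂, hC₂, hg⟩ := hg
  refine ⟨C₁ + C₂, m₁ + m₂, add_nonneg hC₁ hC₂, fun p h₁ h₂ => ?_⟩
  have hw : 1 ≤ (1 + p.1) * (1 + p.2) := by nlinarith
  calc |f p + g p| ≤ |f p| + |g p| := abs_add_le _ _
    _ ≤ C₁ * ((1 + p.1) * (1 + p.2)) ^ m₁ + C₂ * ((1 + p.1) * (1 + p.2)) ^ m₂ :=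
      add_le_add (hf p h₁ h₂) (hg p h₁ h₂)
    _ ≤ C₁ * ((1 + p.1) * (1 + p.2)) ^ (m₁ + m₂)
          + C₂ * ((1 + p.1) * (1 + p.2)) ^ (m₁ + m₂) := by
      gcongr <;> first | exact hw | omega
    _ = (C₁ + C₂) * ((1 + p.1) * (1 + p.2)) ^ (m₁ + m₂) := by ring

@[fun_prop]
lemma mul (hf : HasPolyGrowthOnQuadrant f) (hg : HasPolyGrowthOnQuadrant g) :
    HasPolyGrowthOnQuadrant fun p => f p * g p := by
  obtain ⟨C₁, m₁, hC₁, hf⟩ := hf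
  obtain ⟨C₂, m₂, hC₂, hg⟩ := hg
  refine ⟨C₁ * C₂, m₁ + m₂, mul_nonneg hC₁ hC₂, fun p h₁ h₂ => ?_⟩
  rw [abs_mul, pow_add, mul_mul_mul_comm]
  exact mul_le_mul (hf p h₁ h₂) (hg p h₁ h₂) (abs_nonneg _) (by positivity)

@[fun_prop]
lemma neg (hf : HasPolyGrowthOnQuadrant f) : HasPolyGrowthOnQuadrant fun p => -f p := by
  obtain ⟨C, m, hC, hf⟩ := hf
  exact ⟨C, m, hC, fun p h₁ h₂ => by simpa only [abs_neg] using hf p h₁ h₂⟩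

@[fun_prop]
lemma sub (hf : HasPolyGrowthOnQuadrant f) (hg : HasPolyGrowthOnQuadrant g) :
    HasPolyGrowthOnQuadrant fun p => f p - g p := by
  simpa only [sub_eq_add_neg] using hf.add hg.neg

@[fun_prop]
lemma div_const (hf : HasPolyGrowthOnQuadrant f) (c : ℝ) :
    HasPolyGrowthOnQuadrant fun p => f p / c := by
  simpa only [div_eq_mul_inv] using hf.mul (const c⁻¹)

@[fun_prop]
lemma pow (hf : HasPolyGrowthOnQuadrant f) (n : ℕ) :
    HasPolyGrowthOnQuadrant fun p => f p ^ n := by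
  induction n with
  | zero => simpa only [pow_zero] using const 1
  | succ n ih => simpa only [pow_succ] using ih.mul hf

end HasPolyGrowthOnQuadrant

lemma integrableOn_exp_neg_mul_one_add_pow (m : ℕ) :
    IntegrableOn (fun r : ℝ => exp (-r) * (1 + r) ^ m) (Ioi 0) := by
  have hGamma (k : ℕ) : IntegrableOn (fun r : ℝ => exp (-r) * r ^ k) (Ioi 0) := by
    simpa [Real.rpow_natCast] using Real.GammaIntegral_convergent (s := k + 1) (by positivity)
  simp_rw [add_comm (1 : ℝ), add_pow, one_pow, mul_one, Finset.mul_sum, ← mul_assoc]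
  exact integrable_finsetSum _ fun k _ => (hGamma k).mul_const _

noncomputable abbrev quadrantMeasure : Measure (ℝ × ℝ) :=
  (volume.restrict (Ioi 0)).prod (volume.restrict (Ioi 0))

lemma ae_quadrantMeasure_nonneg : ∀ᵐ p ∂quadrantMeasure, 0 ≤ p.1 ∧ 0 ≤ p.2 := by
  rw [quadrantMeasure, Measure.prod_restrict]
  filter_upwards [ae_restrict_mem (measurableSet_Ioi.prod measurableSet_Ioi)] with p hp
  exact ⟨hp.1.out.le, hp.2.out.le⟩

lemma HasPolyGrowthOnQuadrant.integrable {g : ℝ × ℝ → ℝ} (hg : HasPolyGrowthOnQuadrant g)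
    (hc : Continuous g) :
    Integrable (fun p => exp (-p.1 - p.2) * g p) quadrantMeasure := by
  obtain ⟨C, m, -, hb⟩ := hg
  have hdom : Integrable (fun p : ℝ × ℝ =>
      C * ((exp (-p.1) * (1 + p.1) ^ m) * (exp (-p.2) * (1 + p.2) ^ m))) quadrantMeasure :=
    ((integrableOn_exp_neg_mul_one_add_pow m).mul_prod
      (integrableOn_exp_neg_mul_one_add_pow m)).const_mul C
  refine hdom.mono' (by fun_prop) ?_
  filter_upwards [ae_quadrantMeasure_nonneg] with p hp
  rw [norm_mul, norm_of_nonneg (exp_pos _).le, Real.norm_eq_abs]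
  calc exp (-p.1 - p.2) * |g p| ≤ exp (-p.1 - p.2) * (C * ((1 + p.1) * (1 + p.2)) ^ m) :=
        mul_le_mul_of_nonneg_left (hb p hp.1 hp.2) (exp_pos _).le
    _ = C * ((exp (-p.1) * (1 + p.1) ^ m) * (exp (-p.2) * (1 + p.2) ^ m)) := by
        rw [sub_eq_add_neg, exp_add, mul_pow]; ring

lemma integral_exp_neg_mul_deriv {g g' : ℝ → ℝ} {a : ℝ}
    (hg : ∀ r ∈ Ici a, HasDerivAt g (g' r) r)
    (hgi : IntegrableOn (fun r => exp (-r) * g r) (Ioi a))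
    (hg'i : IntegrableOn (fun r => exp (-r) * g' r) (Ioi a)) :
    ∫ r in Ioi a, exp (-r) * g' r = (∫ r in Ioi a, exp (-r) * g r) - exp (-a) * g a := by
  have hderiv : ∀ r ∈ Ici a,
      HasDerivAt (fun r => exp (-r) * g r) (exp (-r) * g' r - exp (-r) * g r) r := fun r hr =>
    (((hasDerivAt_neg r).exp).mul (hg r hr)).congr_deriv (by ring)
  have hlim : Tendsto (fun r => exp (-r) * g r) atTop (𝓝 0) :=
    tendsto_zero_of_hasDerivAt_of_integrableOn_Ioi (fun r hr => hderiv r (Ioi_subset_Ici_self hr))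
      (hg'i.sub hgi) hgi
  have hftc := integral_Ioi_of_hasDerivAt_of_tendsto' hderiv (hg'i.sub hgi) hlim
  rw [integral_sub hg'i hgi] at hftc
  linarith

lemma integral_quadrant_exp_neg_mul_deriv_fst {G G' : ℝ → ℝ → ℝ}
    (hG : ∀ r s, HasDerivAt (G · s) (G' r s) r)
    (hGi : Integrable (fun p => exp (-p.1 - p.2) * G p.1 p.2) quadrantMeasure)
    (hG'i : Integrable (fun p => exp (-p.1 - p.2) * G' p.1 p.2) quadrantMeasure) :
    ∫ p, exp (-p.1 - p.2) * G' p.1 p.2 ∂quadrantMeasure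
      = (∫ p, exp (-p.1 - p.2) * G p.1 p.2 ∂quadrantMeasure)
        - ∫ s in Ioi 0, exp (-s) * G 0 s := by
  have hsplit (F : ℝ → ℝ → ℝ) (s : ℝ) :
      ∫ r in Ioi 0, exp (-r - s) * F r s = exp (-s) * ∫ r in Ioi 0, exp (-r) * F r s := by
    rw [← integral_const_mul]
    congr 1 with r
    rw [sub_eq_add_neg, exp_add]; ring
  have hslice {F : ℝ → ℝ → ℝ}
      (hF : Integrable (fun p => exp (-p.1 - p.2) * F p.1 p.2) quadrantMeasure) :
      ∀ᵐ s ∂(volume.restrict (Ioi 0)), IntegrableOn (fun r => exp (-r) * F r s) (Ioi 0) := by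
    filter_upwards [hF.prod_left_ae] with s hs
    refine (hs.const_mul (exp s)).congr (ae_of_all _ fun r => ?_)
    dsimp only
    rw [← mul_assoc, ← exp_add]
    ring_nf
  rw [eq_sub_iff_add_eq, ← eq_sub_iff_add_eq', integral_prod_symm _ hGi,
    integral_prod_symm _ hG'i, ← integral_sub hGi.integral_prod_right hG'i.integral_prod_right]
  refine integral_congr_ae ?_
  filter_upwards [hslice hGi, hslice hG'i] with s hs hs'
  rw [hsplit, hsplit, integral_exp_neg_mul_deriv (fun r _ => hG r s) hs hs', neg_zero, exp_zero]
  ring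

lemma integral_quadrant_exp_neg_mul_add_swap {g : ℝ → ℝ → ℝ}
    (hg : Integrable (fun p => exp (-p.1 - p.2) * g p.1 p.2) quadrantMeasure) :
    ∫ p, exp (-p.1 - p.2) * (g p.1 p.2 + g p.2 p.1) ∂quadrantMeasure
      = 2 * ∫ p, exp (-p.1 - p.2) * g p.1 p.2 ∂quadrantMeasure := by
  have hswap : (fun p : ℝ × ℝ => exp (-p.1 - p.2) * g p.2 p.1)
      = fun p => exp (-p.swap.1 - p.swap.2) * g p.swap.1 p.swap.2 := by
    ext p; simp only [Prod.fst_swap, Prod.snd_swap]; ring_nf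
  simp_rw [mul_add]
  rw [integral_add hg (hswap ▸ hg.swap), hswap,
    integral_prod_swap (fun p : ℝ × ℝ => exp (-p.1 - p.2) * g p.1 p.2)]
  ring

def quadAII (x r s : ℝ) : ℝ := 4 * x ^ 2 + 4 * x * (r + s) + (r - s) ^ 2

lemma quadAII_comm (x r s : ℝ) : quadAII x s r = quadAII x r s := by unfold quadAII; ring

lemma quadAII_zero_left (x s : ℝ) : quadAII x 0 s = (2 * x + s) ^ 2 := by unfold quadAII; ring

lemma integrable_quadAII_pow (N : ℕ) (x : ℝ) :
    Integrable (fun p => exp (-p.1 - p.2) * quadAII x p.1 p.2 ^ N) quadrantMeasure :=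
  HasPolyGrowthOnQuadrant.integrable (by unfold quadAII; fun_prop) (by unfold quadAII; fun_prop)

lemma fAII_eq_integral_quadrant (N : ℕ) (x : ℝ) :
    fAII N x = ∫ p, exp (-p.1 - p.2) * quadAII x p.1 p.2 ^ N ∂quadrantMeasure :=
  (integral_prod _ (integrable_quadAII_pow N x)).symm

noncomputable def fluxAII (N : ℕ) (x r s : ℝ) : ℝ := (2 * x - r + s) / 2 * quadAII x r s ^ N

noncomputable def fluxAIIDeriv (N : ℕ) (x r s : ℝ) : ℝ :=
  -(quadAII x r s ^ N / 2)
    + (2 * x - r + s) / 2 * (N * quadAII x r s ^ (N - 1) * (4 * x + 2 * (r - s)))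

lemma hasDerivAt_fluxAII (N : ℕ) (x r s : ℝ) :
    HasDerivAt (fluxAII N x · s) (fluxAIIDeriv N x r s) r := by
  have hq : HasDerivAt (quadAII x · s) (4 * x + 2 * (r - s)) r := by
    have := ((((hasDerivAt_id r).add_const s).const_mul (4 * x)).const_add (4 * x ^ 2)).add
      (((hasDerivAt_id r).sub_const s).fun_pow 2)
    exact this.congr_deriv (by simp)
  have hl : HasDerivAt (fun r => (2 * x - r + s) / 2) (-(1 / 2)) r :=
    ((((hasDerivAt_id r).const_sub (2 * x)).add_const s).div_const 2).congr_deriv (by ring)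
  exact (hl.mul (hq.fun_pow N)).congr_deriv (by unfold fluxAIIDeriv; ring)

lemma fluxAII_add_comm (N : ℕ) (x r s : ℝ) :
    fluxAII N x r s + fluxAII N x s r = 2 * x * quadAII x r s ^ N := by
  unfold fluxAII; rw [quadAII_comm]; ring

lemma two_mul_deriv_quadAII_pow (N : ℕ) (x r s : ℝ) :
    2 * x * (N * quadAII x r s ^ (N - 1) * (8 * x + 4 * (r + s)))
      = (2 * N + 1) * quadAII x r s ^ N + (fluxAIIDeriv N x r s + fluxAIIDeriv N x s r) := by
  unfold fluxAIIDeriv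
  rw [quadAII_comm x s r]
  cases N with
  | zero => push_cast; ring
  | succ n =>
    simp only [Nat.add_sub_cancel, pow_succ]
    unfold quadAII; push_cast; ring

lemma integral_exp_neg_mul_add_pow (c : ℝ) (m : ℕ) :
    ∫ s in Ioi 0, exp (-s) * (c + s) ^ m = exp c * upperGamma (m + 1) c := by
  have hshift := (measurePreserving_add_right volume c).setIntegral_preimage_emb
    (measurableEmbedding_addRight c) (fun u => u ^ m * exp (-u)) (Ioi c)
  rw [preimage_add_const_Ioi, sub_self] at hshift
  rw [upperGamma, add_sub_cancel_right]
  simp_rw [Real.rpow_natCast]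
  rw [← hshift, ← integral_const_mul]
  congr 1 with s
  rw [add_comm s c, neg_add, exp_add, exp_neg c]
  field_simp

lemma two_mul_integral_deriv_quadAII_pow (N : ℕ) (x : ℝ) :
    2 * x * ∫ p, exp (-p.1 - p.2) *
        (N * quadAII x p.1 p.2 ^ (N - 1) * (8 * x + 4 * (p.1 + p.2))) ∂quadrantMeasure
      = (2 * x + 2 * N + 1) * fAII N x - exp (2 * x) * upperGamma (2 * N + 2) (2 * x) := by
  have hflux : Integrable (fun p => exp (-p.1 - p.2) * fluxAII N x p.1 p.2) quadrantMeasure :=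
    HasPolyGrowthOnQuadrant.integrable (by unfold fluxAII quadAII; fun_prop)
      (by unfold fluxAII quadAII; fun_prop)
  have hdflux :
      Integrable (fun p => exp (-p.1 - p.2) * fluxAIIDeriv N x p.1 p.2) quadrantMeasure :=
    HasPolyGrowthOnQuadrant.integrable (by unfold fluxAIIDeriv quadAII; fun_prop)
      (by unfold fluxAIIDeriv quadAII; fun_prop)
  have hdflux_add : Integrable (fun p => exp (-p.1 - p.2) *
      (fluxAIIDeriv N x p.1 p.2 + fluxAIIDeriv N x p.2 p.1)) quadrantMeasure :=
    HasPolyGrowthOnQuadrant.integrable (by unfold fluxAIIDeriv quadAII; fun_prop)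
      (by unfold fluxAIIDeriv quadAII; fun_prop)
  have hboundary : ∫ s in Ioi 0, exp (-s) * fluxAII N x 0 s
      = exp (2 * x) * upperGamma (2 * N + 2) (2 * x) / 2 := by
    have h := integral_exp_neg_mul_add_pow (2 * x) (2 * N + 1)
    push_cast at h
    rw [show (2 : ℝ) * N + 1 + 1 = 2 * N + 2 by ring] at h
    rw [← h, ← integral_div]
    congr 1 with s
    rw [fluxAII, quadAII_zero_left, ← pow_mul, pow_succ]
    ring
  calc 2 * x * ∫ p, exp (-p.1 - p.2) *
        (N * quadAII x p.1 p.2 ^ (N - 1) * (8 * x + 4 * (p.1 + p.2))) ∂quadrantMeasure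
      = ∫ p, ((2 * N + 1) * (exp (-p.1 - p.2) * quadAII x p.1 p.2 ^ N) + exp (-p.1 - p.2) *
          (fluxAIIDeriv N x p.1 p.2 + fluxAIIDeriv N x p.2 p.1)) ∂quadrantMeasure := by
        rw [← integral_const_mul]
        congr 1 with p
        rw [mul_left_comm, two_mul_deriv_quadAII_pow]
        ring
    _ = (2 * N + 1) * fAII N x
          + 2 * ∫ p, exp (-p.1 - p.2) * fluxAIIDeriv N x p.1 p.2 ∂quadrantMeasure := by
        rw [integral_add ((integrable_quadAII_pow N x).const_mul _) hdflux_add,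
          integral_const_mul, integral_quadrant_exp_neg_mul_add_swap hdflux,
          fAII_eq_integral_quadrant]
    _ = (2 * N + 1) * fAII N x + ∫ p, exp (-p.1 - p.2) *
            (fluxAII N x p.1 p.2 + fluxAII N x p.2 p.1) ∂quadrantMeasure
          - exp (2 * x) * upperGamma (2 * N + 2) (2 * x) := by
        rw [integral_quadrant_exp_neg_mul_deriv_fst (hasDerivAt_fluxAII N x) hflux hdflux,
          integral_quadrant_exp_neg_mul_add_swap hflux, hboundary]
        ring
    _ = (2 * x + 2 * N + 1) * fAII N x - exp (2 * x) * upperGamma (2 * N + 2) (2 * x) := by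
        simp_rw [fluxAII_add_comm, mul_left_comm _ (2 * x), integral_const_mul,
          ← fAII_eq_integral_quadrant]
        ring

lemma hasDerivAt_integral_quadAII_pow (N : ℕ) {x : ℝ} (hx : 0 < x) :
    HasDerivAt (fun y => ∫ p, exp (-p.1 - p.2) * quadAII y p.1 p.2 ^ N ∂quadrantMeasure)
      (∫ p, exp (-p.1 - p.2) * (N * quadAII x p.1 p.2 ^ (N - 1) * (8 * x + 4 * (p.1 + p.2)))
        ∂quadrantMeasure) x := by
  have hderiv (y r s : ℝ) : HasDerivAt (fun y => exp (-r - s) * quadAII y r s ^ N)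
      (exp (-r - s) * (N * quadAII y r s ^ (N - 1) * (8 * y + 4 * (r + s)))) y := by
    have hq : HasDerivAt (quadAII · r s) (8 * y + 4 * (r + s)) y :=
      (((hasDerivAt_pow 2 y).const_mul 4).add
        (((hasDerivAt_id' y).const_mul 4).mul_const (r + s)) |>.add_const ((r - s) ^ 2)).congr_deriv
        (by push_cast; ring)
    exact (hq.fun_pow N).const_mul _
  have hbound (y r s : ℝ) (hy : y ∈ Metric.ball x x) (hr : 0 ≤ r) (hs : 0 ≤ s) :
      ‖exp (-r - s) * (N * quadAII y r s ^ (N - 1) * (8 * y + 4 * (r + s)))‖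
        ≤ exp (-r - s) * (N * ((4 * x + r + s) ^ 2) ^ (N - 1) * (4 * (4 * x + r + s))) := by
    rw [Metric.mem_ball, Real.dist_eq, abs_lt] at hy
    have hy₀ : 0 < y := by linarith [hy.1]
    have hy₁ : y < 2 * x := by linarith [hy.2]
    have hq : 0 ≤ quadAII y r s := by unfold quadAII; positivity
    rw [norm_mul, norm_of_nonneg (exp_pos _).le, Real.norm_eq_abs, abs_of_nonneg (by positivity)]
    gcongr
    · unfold quadAII
      nlinarith [mul_nonneg hr hs, mul_nonneg (sub_nonneg.2 hy₁.le) (add_nonneg hr hs),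
        mul_nonneg hy₀.le (sub_nonneg.2 hy₁.le)]
    · linarith
  refine (hasDerivAt_integral_of_dominated_loc_of_deriv_le (Metric.ball_mem_nhds x hx)
    (bound := fun p => exp (-p.1 - p.2) *
      (N * ((4 * x + p.1 + p.2) ^ 2) ^ (N - 1) * (4 * (4 * x + p.1 + p.2))))
    (Eventually.of_forall fun y => (integrable_quadAII_pow N y).aestronglyMeasurable)
    (integrable_quadAII_pow N x) (by unfold quadAII; fun_prop) ?_
    (HasPolyGrowthOnQuadrant.integrable (g := fun p =>
      N * ((4 * x + p.1 + p.2) ^ 2) ^ (N - 1) * (4 * (4 * x + p.1 + p.2))) (by fun_prop)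
      (by fun_prop)) (ae_of_all _ fun p y _ => hderiv y p.1 p.2)).2
  filter_upwards [ae_quadrantMeasure_nonneg] with p hp y hy
  exact hbound y p.1 p.2 hy hp.1 hp.2

theorem statement4_general (N : ℕ) :
    ∀ x ∈ Set.Ioi (0 : ℝ),
      HasDerivAt (fAII N)
        ((1 + (N : ℝ) / x + 1 / (2 * x)) * fAII N x -
          (1 / (2 * x)) * Real.exp (2 * x) * upperGamma (2 * N + 2) (2 * x)) x := by
  intro x (hx : 0 < x)
  have hderiv := hasDerivAt_integral_quadAII_pow N hx
  rw [← funext (fAII_eq_integral_quadrant N)] at hderiv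
  convert hderiv using 1
  rw [eq_div_of_mul_eq (by positivity)
    ((mul_comm _ _).trans (two_mul_integral_deriv_quadAII_pow N x))]
  field_simp

/-- `f_N` is differentiable on `(0,∞)` and satisfies the inhomogeneous first-order ODE
`f_N′(x) = (1 + N/x + 1/(2x)) f_N(x) − (1/(2x)) e^{2x} Γ(2N+2, 2x)`. -/
theorem statement4 (N : ℕ) (hN : 1 ≤ N) :
    ∀ x ∈ Set.Ioi (0 : ℝ),
      HasDerivAt (fAII N)
        ((1 + (N : ℝ) / x + 1 / (2 * x)) * fAII N x -
          (1 / (2 * x)) * Real.exp (2 * x) * upperGamma (2 * N + 2) (2 * x)) x :=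
  statement4_general N
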